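/- A basis $\mathcal{X}$ of a quasi-Banach space is nearly unconditional if and only if it is nearly truncation quasi-greedy. Moreover the associated functions satisfy $\lambda(a)\lesssim\theta(a)\lesssim\phi(a)\lesssim a^{-1}\lambda(a)$ for $0<a<1$, with implicit constants independent of $a$. -/

import Mathlib

open Finset Set

/-- A (quasi-)basis of a quasi-Banach space: a quasi-norm `q` with modulus of
concavity `κ`, together with a norm-bounded biorthogonal system `(e, c)`. -/
structure QBasis (X : Type*) [AddCommGroup X] [Module ℝ X] where
  q : X → ℝ
  κ : ℝ
  one_le_κ : 1 ≤ κ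
  q_nonneg : ∀ f, 0 ≤ q f
  q_eq_zero_iff : ∀ f, q f = 0 ↔ f = 0
  q_smul : ∀ (t : ℝ) (f : X), q (t • f) = |t| * q f
  q_add : ∀ f g, q (f + g) ≤ κ * (q f + q g)
  e : ℕ → X
  c : ℕ → X →ₗ[ℝ] ℝ
  biorth : ∀ m n, c m (e n) = if m = n then (1 : ℝ) else 0
  e_bdd : ∃ M, ∀ n, q (e n) ≤ M
  c_bdd : ∃ M, ∀ n f, |c n f| ≤ M * q f

namespace QBasis

variable {X : Type*} [AddCommGroup X] [Module ℝ X] (B : QBasis X)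

/-- Coordinate projection on a finite set `A`. -/
noncomputable def S (A : Finset ℕ) (f : X) : X := ∑ n ∈ A, B.c n f • B.e n

/-- The set `𝒬` of vectors with coefficients in the unit ball of `ℓ∞`. -/
def inQ (f : X) : Prop := ∀ n, |B.c n f| ≤ 1

/-- `A` is the set `A(a,f) = {n : |c n f| ≥ a}` of coefficients above the threshold `a`. -/
def thrSet (a : ℝ) (f : X) (A : Finset ℕ) : Prop := ∀ n, n ∈ A ↔ a ≤ |B.c n f|

/-- `A` is a greedy set of `f`. -/
def greedySet (f : X) (A : Finset ℕ) : Prop :=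
  ∀ n ∈ A, ∀ k, k ∉ A → |B.c k f| ≤ |B.c n f|

/-- The restricted truncation operator associated with a finite set `A`:
`R(f,A) = min_{n∈A} |c n f| ∑_{n∈A} sgn (c n f) • e n`. -/
noncomputable def R (A : Finset ℕ) (f : X) : X :=
  if h : A.Nonempty then
    (A.inf' h fun n => |B.c n f|) • ∑ n ∈ A, Real.sign (B.c n f) • B.e n
  else 0

/-- `lam` is the nearly truncation quasi-greedy function of the basis: for every
`a ∈ (0,1)`, `lam a` is the smallest constant `C` with `q (R^{(a)} f) ≤ C * q f`
for all `f ∈ 𝒬`. -/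
def NTQGFun (lam : ℝ → ℝ) : Prop :=
  ∀ a ∈ Set.Ioo (0 : ℝ) 1,
    (∀ f, B.inQ f → ∀ A : Finset ℕ, B.thrSet a f A → B.q (B.R A f) ≤ lam a * B.q f) ∧
    (∀ C : ℝ, (∀ f, B.inQ f → ∀ A : Finset ℕ, B.thrSet a f A → B.q (B.R A f) ≤ C * B.q f) →
      lam a ≤ C)

/-- The basis is nearly truncation quasi-greedy. -/
def NearlyTQG : Prop :=
  ∀ a ∈ Set.Ioo (0 : ℝ) 1, ∃ C : ℝ,
    ∀ f, B.inQ f → ∀ A : Finset ℕ, B.thrSet a f A → B.q (B.R A f) ≤ C * B.q f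

/-- The basis is nearly unconditional. -/
def NearlyUnconditional : Prop :=
  ∀ a ∈ Set.Ioo (0 : ℝ) 1, ∃ C : ℝ,
    ∀ f, B.inQ f → ∀ Aa A : Finset ℕ, B.thrSet a f Aa → A ⊆ Aa → B.q (B.S A f) ≤ C * B.q f

/-- `phi` is the nearly unconditionality function: `phi a` is the smallest `C` with
`q (S_A f) ≤ C * q f` for `f ∈ 𝒬` and `A ⊆ A(a,f)`. -/
def NUFun (phi : ℝ → ℝ) : Prop :=
  ∀ a ∈ Set.Ioo (0 : ℝ) 1,
    (∀ f, B.inQ f → ∀ Aa A : Finset ℕ, B.thrSet a f Aa → A ⊆ Aa →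
      B.q (B.S A f) ≤ phi a * B.q f) ∧
    (∀ C : ℝ, (∀ f, B.inQ f → ∀ Aa A : Finset ℕ, B.thrSet a f Aa → A ⊆ Aa →
      B.q (B.S A f) ≤ C * B.q f) → phi a ≤ C)

/-- `theta` is the thresholding-boundedness function: `theta a` is the smallest `C` with
`q (S_{A(a,f)} f) ≤ C * q f` for `f ∈ 𝒬`. -/
def ThetaFun (theta : ℝ → ℝ) : Prop :=
  ∀ a ∈ Set.Ioo (0 : ℝ) 1,
    (∀ f, B.inQ f → ∀ A : Finset ℕ, B.thrSet a f A → B.q (B.S A f) ≤ theta a * B.q f) ∧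
    (∀ C : ℝ, (∀ f, B.inQ f → ∀ A : Finset ℕ, B.thrSet a f A → B.q (B.S A f) ≤ C * B.q f) →
      theta a ≤ C)

/-- The basis is truncation quasi-greedy: the restricted truncation operators are
uniformly bounded over greedy sets. -/
def TruncationQG : Prop :=
  ∃ C : ℝ, ∀ f (A : Finset ℕ), B.greedySet f A → B.q (B.R A f) ≤ C * B.q f

end QBasis

namespace QBasis

variable {X : Type*} [AddCommGroup X] [Module ℝ X] (B : QBasis X)

lemma q_zero : B.q 0 = 0 := (B.q_eq_zero_iff 0).2 rfl

lemma kap_pos : 0 < B.κ := lt_of_lt_of_le one_pos B.one_le_κ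

lemma q_neg (f : X) : B.q (-f) = B.q f := by
  have := B.q_smul (-1) f
  simpa using this

lemma q_sub_le (f g : X) : B.q (f - g) ≤ B.κ * (B.q f + B.q g) := by
  rw [sub_eq_add_neg]
  calc B.q (f + -g) ≤ B.κ * (B.q f + B.q (-g)) := B.q_add f (-g)
  _ = B.κ * (B.q f + B.q g) := by rw [B.q_neg]

/-- auxiliary sign lemmas -/
lemma sgn_mul_abs (x : ℝ) : Real.sign x * |x| = x := by
  rcases lt_trichotomy x 0 with h | h | h
  · rw [Real.sign_of_neg h, abs_of_neg h]; ring
  · simp [h]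
  · rw [Real.sign_of_pos h, abs_of_pos h]; ring

lemma abs_sgn_le_one (x : ℝ) : |Real.sign x| ≤ 1 := by
  rcases Real.sign_apply_eq x with h | h | h <;> rw [h] <;> norm_num

lemma abs_sgn_of_ne {x : ℝ} (hx : x ≠ 0) : |Real.sign x| = 1 := by
  rcases Real.sign_apply_eq_of_ne_zero x hx with h | h <;> rw [h] <;> norm_num

lemma sgn_mul_pos {t x : ℝ} (ht : 0 < t) : Real.sign (t * x) = Real.sign x := by
  rcases lt_trichotomy x 0 with h | h | h
  · rw [Real.sign_of_neg h, Real.sign_of_neg (mul_neg_of_pos_of_neg ht h)]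
  · simp [h]
  · rw [Real.sign_of_pos h, Real.sign_of_pos (mul_pos ht h)]

lemma sgn_sgn (x : ℝ) : Real.sign (Real.sign x) = Real.sign x := by
  rcases Real.sign_apply_eq x with h | h | h <;> rw [h] <;> norm_num [Real.sign_of_neg]

/-- w : the sign vector on a finite set -/
noncomputable def w (A : Finset ℕ) (f : X) : X := ∑ n ∈ A, Real.sign (B.c n f) • B.e n

lemma R_eq (A : Finset ℕ) (f : X) (h : A.Nonempty) :
    B.R A f = (A.inf' h fun n => |B.c n f|) • B.w A f := dif_pos h

lemma R_empty (f : X) : B.R ∅ f = 0 := dif_neg (by simp)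

lemma w_empty (f : X) : B.w ∅ f = 0 := Finset.sum_empty

lemma S_empty (f : X) : B.S ∅ f = 0 := Finset.sum_empty

lemma c_sum (A : Finset ℕ) (t : ℕ → ℝ) (k : ℕ) :
    B.c k (∑ n ∈ A, t n • B.e n) = if k ∈ A then t k else 0 := by
  rw [map_sum]
  have : ∀ n ∈ A, B.c k (t n • B.e n) = if n = k then t n else 0 := by
    intro n _
    rw [map_smul, smul_eq_mul, B.biorth k n]
    by_cases h : n = k
    · subst h; simp
    · simp [h, Ne.symm h]
  rw [Finset.sum_congr rfl this, Finset.sum_ite_eq' A k t]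

lemma c_S (A : Finset ℕ) (f : X) (k : ℕ) :
    B.c k (B.S A f) = if k ∈ A then B.c k f else 0 := c_sum B A _ k

lemma c_w (A : Finset ℕ) (f : X) (k : ℕ) :
    B.c k (B.w A f) = if k ∈ A then Real.sign (B.c k f) else 0 := c_sum B A _ k

/-- fold over range: quasi-triangle iterated -/
lemma q_sum_range_le (n : ℕ) (x : ℕ → X) :
    B.q (∑ i ∈ Finset.range n, x i) ≤ ∑ i ∈ Finset.range n, B.κ ^ (n - i) * B.q (x i) := by
  induction n with
  | zero => simp [B.q_zero]
  | succ n ih =>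
    rw [Finset.sum_range_succ]
    calc B.q (∑ i ∈ Finset.range n, x i + x n)
        ≤ B.κ * (B.q (∑ i ∈ Finset.range n, x i) + B.q (x n)) := B.q_add _ _
      _ ≤ B.κ * ((∑ i ∈ Finset.range n, B.κ ^ (n - i) * B.q (x i)) + B.q (x n)) := by
          apply mul_le_mul_of_nonneg_left _ (B.kap_pos).le
          exact add_le_add_left ih _
      _ = (∑ i ∈ Finset.range n, B.κ ^ (n + 1 - i) * B.q (x i)) + B.κ ^ (n + 1 - n) * B.q (x n) := by
          rw [mul_add, Finset.mul_sum]
          congr 1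
          · apply Finset.sum_congr rfl
            intro i hi
            have hi' : i < n := Finset.mem_range.1 hi
            have : n + 1 - i = (n - i) + 1 := by omega
            rw [this, pow_succ]; ring
          · have : n + 1 - n = 1 := by omega
            rw [this, pow_one]
      _ = ∑ i ∈ Finset.range (n + 1), B.κ ^ (n + 1 - i) * B.q (x i) := by
          rw [Finset.sum_range_succ]

/-- crude fold over arbitrary finsets -/
lemma q_sum_le_card (F : Finset ℕ) (x : ℕ → X) :
    B.q (∑ n ∈ F, x n) ≤ B.κ ^ F.card * ∑ n ∈ F, B.q (x n) := by
  classical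
  induction F using Finset.cons_induction with
  | empty => simp [B.q_zero]
  | cons a s ha ih =>
    rw [Finset.sum_cons, Finset.card_cons]
    have h1 : B.q (x a + ∑ n ∈ s, x n) ≤ B.κ * (B.q (x a) + B.q (∑ n ∈ s, x n)) := B.q_add _ _
    have h2 : B.q (x a) + B.q (∑ n ∈ s, x n) ≤ B.q (x a) + B.κ ^ s.card * ∑ n ∈ s, B.q (x n) :=
      add_le_add_right ih _
    have hκ1 : (1:ℝ) ≤ B.κ ^ s.card := one_le_pow₀ B.one_le_κ
    calc B.q (x a + ∑ n ∈ s, x n) ≤ B.κ * (B.q (x a) + B.κ ^ s.card * ∑ n ∈ s, B.q (x n)) :=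
        le_trans h1 (mul_le_mul_of_nonneg_left h2 B.kap_pos.le)
      _ ≤ B.κ * (B.κ ^ s.card * B.q (x a) + B.κ ^ s.card * ∑ n ∈ s, B.q (x n)) := by
          apply mul_le_mul_of_nonneg_left _ B.kap_pos.le
          apply add_le_add_left
          nlinarith [B.q_nonneg (x a)]
      _ = B.κ ^ (s.card + 1) * (B.q (x a) + ∑ n ∈ s, B.q (x n)) := by rw [pow_succ]; ring
      _ = B.κ ^ (s.card + 1) * ∑ n ∈ Finset.cons a s ha, B.q (x n) := by rw [Finset.sum_cons]

lemma geom_half_sum (I : ℕ) {r : ℝ} (h0 : 0 ≤ r) (h : r ≤ 1/2) :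
    ∑ l ∈ Finset.range I, r ^ l ≤ 2 := by
  induction I with
  | zero => simp
  | succ n ih =>
    rw [geom_sum_succ]
    nlinarith [Finset.sum_nonneg (fun l (_ : l ∈ Finset.range n) => pow_nonneg h0 l)]

end QBasis


namespace QBasis

variable {X : Type*} [AddCommGroup X] [Module ℝ X] (B : QBasis X)

lemma inQ_smul {t : ℝ} (ht : |t| ≤ 1) {f : X} (hf : B.inQ f) : B.inQ (t • f) := by
  intro n
  rw [map_smul, smul_eq_mul, abs_mul]
  calc |t| * |B.c n f| ≤ 1 * 1 := mul_le_mul ht (hf n) (abs_nonneg _) (by norm_num)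
  _ = 1 := by norm_num

lemma S_smul (A : Finset ℕ) (t : ℝ) (f : X) : B.S A (t • f) = t • B.S A f := by
  unfold S
  rw [Finset.smul_sum]
  apply Finset.sum_congr rfl
  intro n _
  rw [map_smul, smul_eq_mul, smul_smul]

lemma w_smul_pos (A : Finset ℕ) {t : ℝ} (ht : 0 < t) (f : X) : B.w A (t • f) = B.w A f := by
  unfold w
  apply Finset.sum_congr rfl
  intro n _
  rw [map_smul, smul_eq_mul, sgn_mul_pos ht]

lemma inf'_mul_left {A : Finset ℕ} (h : A.Nonempty) (g : ℕ → ℝ) {t : ℝ} (ht : 0 ≤ t) :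
    (A.inf' h fun n => t * g n) = t * A.inf' h g := by
  apply le_antisymm
  · obtain ⟨n₀, hn₀, he⟩ := A.exists_mem_eq_inf' h g
    calc (A.inf' h fun n => t * g n) ≤ t * g n₀ := Finset.inf'_le _ hn₀
    _ = t * A.inf' h g := by rw [← he]
  · apply Finset.le_inf'
    intro n hn
    exact mul_le_mul_of_nonneg_left (Finset.inf'_le _ hn) ht

lemma R_smul_pos (A : Finset ℕ) {t : ℝ} (ht : 0 < t) (f : X) : B.R A (t • f) = t • B.R A f := by
  rcases A.eq_empty_or_nonempty with rfl | h
  · rw [B.R_empty, B.R_empty, smul_zero]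
  · rw [B.R_eq A _ h, B.R_eq A f h, B.w_smul_pos A ht f]
    have : (A.inf' h fun n => |B.c n (t • f)|) = t * A.inf' h fun n => |B.c n f| := by
      have : ∀ n, |B.c n (t • f)| = t * |B.c n f| := by
        intro n
        rw [map_smul, smul_eq_mul, abs_mul, abs_of_pos ht]
      calc (A.inf' h fun n => |B.c n (t • f)|) = A.inf' h fun n => t * |B.c n f| := by
            apply Finset.inf'_congr _ rfl
            intro n _
            exact this n
        _ = t * A.inf' h fun n => |B.c n f| := inf'_mul_left h _ ht.le
    rw [this, smul_smul]

lemma thrSet_smul {a s : ℝ} (ha : 0 < a) (has : a ≤ s) {f : X} {A : Finset ℕ}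
    (hA : B.thrSet s f A) : B.thrSet a ((a / s) • f) A := by
  have hs : 0 < s := lt_of_lt_of_le ha has
  intro n
  rw [map_smul, smul_eq_mul, abs_mul, abs_of_pos (div_pos ha hs)]
  rw [hA n]
  constructor
  · intro h
    calc a = (a / s) * s := by field_simp
    _ ≤ (a / s) * |B.c n f| := mul_le_mul_of_nonneg_left h (div_pos ha hs).le
  · intro h
    have h2 : (s / a) * a ≤ (s / a) * ((a / s) * |B.c n f|) :=
      mul_le_mul_of_nonneg_left h (by positivity)
    have e1 : (s / a) * a = s := by field_simp
    have e2 : (s / a) * ((a / s) * |B.c n f|) = |B.c n f| := by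
      field_simp
    rw [e1, e2] at h2
    exact h2

/-- transfer of a valid thresholding constant from level `a` to any level `s ∈ [a,1)` -/
lemma theta_transfer {a C : ℝ} (ha : 0 < a)
    (hC : ∀ f, B.inQ f → ∀ A : Finset ℕ, B.thrSet a f A → B.q (B.S A f) ≤ C * B.q f)
    {s : ℝ} (has : a ≤ s) {f : X} (hf : B.inQ f) {A : Finset ℕ} (hA : B.thrSet s f A) :
    B.q (B.S A f) ≤ C * B.q f := by
  have hs : 0 < s := lt_of_lt_of_le ha has
  have ht : 0 < a / s := div_pos ha hs
  have ht1 : |a / s| ≤ 1 := by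
    rw [abs_of_pos ht]
    exact div_le_one_of_le₀ has hs.le
  have h1 := hC ((a / s) • f) (B.inQ_smul ht1 hf) A (B.thrSet_smul ha has hA)
  rw [B.S_smul, B.q_smul, B.q_smul, abs_of_pos ht] at h1
  have h2 : C * (a / s * B.q f) = (a / s) * (C * B.q f) := by ring
  rw [h2] at h1
  exact le_of_mul_le_mul_left h1 ht

/-- transfer of a valid truncation constant from level `a` to any level `s ∈ [a,1)` -/
lemma lam_transfer {a C : ℝ} (ha : 0 < a)
    (hC : ∀ f, B.inQ f → ∀ A : Finset ℕ, B.thrSet a f A → B.q (B.R A f) ≤ C * B.q f)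
    {s : ℝ} (has : a ≤ s) {f : X} (hf : B.inQ f) {A : Finset ℕ} (hA : B.thrSet s f A) :
    B.q (B.R A f) ≤ C * B.q f := by
  have hs : 0 < s := lt_of_lt_of_le ha has
  have ht : 0 < a / s := div_pos ha hs
  have ht1 : |a / s| ≤ 1 := by
    rw [abs_of_pos ht]
    exact div_le_one_of_le₀ has hs.le
  have h1 := hC ((a / s) • f) (B.inQ_smul ht1 hf) A (B.thrSet_smul ha has hA)
  rw [B.R_smul_pos A ht, B.q_smul, B.q_smul, abs_of_pos ht] at h1
  have h2 : C * (a / s * B.q f) = (a / s) * (C * B.q f) := by ring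
  rw [h2] at h1
  exact le_of_mul_le_mul_left h1 ht

lemma e_zero_pos : 0 < B.q (B.e 0) := by
  rcases lt_or_eq_of_le (B.q_nonneg (B.e 0)) with h | h
  · exact h
  · exfalso
    have he : B.e 0 = 0 := (B.q_eq_zero_iff (B.e 0)).1 h.symm
    have := B.biorth 0 0
    rw [he, map_zero] at this
    simp at this

lemma inQ_e_zero : B.inQ (B.e 0) := by
  intro n
  rw [B.biorth n 0]
  by_cases h : n = 0 <;> simp [h]

lemma thrSet_e_zero {s : ℝ} (hs : 0 < s) (hs1 : s ≤ 1) : B.thrSet s (B.e 0) {0} := by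
  intro n
  rw [B.biorth n 0]
  by_cases h : n = 0
  · subst h; simp [hs1]
  · simp [h, not_le.2 hs]

lemma ge_one_of_valid_S {s C : ℝ} (hs : 0 < s) (hs1 : s ≤ 1)
    (h : ∀ f, B.inQ f → ∀ A : Finset ℕ, B.thrSet s f A → B.q (B.S A f) ≤ C * B.q f) :
    1 ≤ C := by
  have h1 := h (B.e 0) B.inQ_e_zero {0} (B.thrSet_e_zero hs hs1)
  have hS : B.S {0} (B.e 0) = B.e 0 := by
    unfold S
    rw [Finset.sum_singleton, B.biorth 0 0]
    simp
  rw [hS] at h1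
  nlinarith [B.e_zero_pos]

lemma ge_one_of_valid_R {s C : ℝ} (hs : 0 < s) (hs1 : s ≤ 1)
    (h : ∀ f, B.inQ f → ∀ A : Finset ℕ, B.thrSet s f A → B.q (B.R A f) ≤ C * B.q f) :
    1 ≤ C := by
  have h1 := h (B.e 0) B.inQ_e_zero {0} (B.thrSet_e_zero hs hs1)
  have hR : B.R {0} (B.e 0) = B.e 0 := by
    rw [B.R_eq _ _ (Finset.singleton_nonempty 0)]
    unfold w
    rw [Finset.sum_singleton, Finset.inf'_singleton, B.biorth 0 0]
    simp
  rw [hR] at h1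
  nlinarith [B.e_zero_pos]

/-- M1: control of the full sign vector from a valid truncation constant -/
lemma w_bound {a C : ℝ} (ha : 0 < a) (hC : 0 ≤ C)
    (hL : ∀ g, B.inQ g → ∀ A : Finset ℕ, B.thrSet a g A → B.q (B.R A g) ≤ C * B.q g)
    {f : X} (hf : B.inQ f) {Aa : Finset ℕ} (hAa : B.thrSet a f Aa) :
    B.q (B.w Aa f) ≤ C / a * B.q f := by
  rcases Aa.eq_empty_or_nonempty with rfl | h
  · rw [B.w_empty, B.q_zero]
    exact mul_nonneg (div_nonneg hC ha.le) (B.q_nonneg f)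
  · set m := Aa.inf' h fun n => |B.c n f| with hm
    have hma : a ≤ m := Finset.le_inf' h _ (fun n hn => (hAa n).1 hn)
    have hm0 : 0 < m := lt_of_lt_of_le ha hma
    have hR := hL f hf Aa hAa
    rw [B.R_eq Aa f h, B.q_smul, abs_of_pos hm0] at hR
    have hinv : m⁻¹ ≤ a⁻¹ := by
      exact inv_anti₀ ha hma
    calc B.q (B.w Aa f) = m⁻¹ * (m * B.q (B.w Aa f)) := by field_simp
    _ ≤ m⁻¹ * (C * B.q f) := mul_le_mul_of_nonneg_left hR (inv_nonneg.2 hm0.le)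
    _ ≤ a⁻¹ * (C * B.q f) := by
        apply mul_le_mul_of_nonneg_right hinv (mul_nonneg hC (B.q_nonneg f))
    _ = C / a * B.q f := by ring

end QBasis


namespace QBasis

variable {X : Type*} [AddCommGroup X] [Module ℝ X] (B : QBasis X)

/-- base-`b` digit `i+1` of a real number `s` -/
noncomputable def dig (b : ℕ) (i : ℕ) (s : ℝ) : ℕ := ⌊s * (b:ℝ)^(i+1)⌋₊ - b * ⌊s * (b:ℝ)^i⌋₊

lemma floor_mul_le (b : ℕ) (i : ℕ) {s : ℝ} (hs : 0 ≤ s) :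
    b * ⌊s * (b:ℝ)^i⌋₊ ≤ ⌊s * (b:ℝ)^(i+1)⌋₊ := by
  apply Nat.le_floor
  push_cast
  calc ((b:ℝ)) * (⌊s*(b:ℝ)^i⌋₊:ℝ) ≤ (b:ℝ) * (s * (b:ℝ)^i) := by
        apply mul_le_mul_of_nonneg_left (Nat.floor_le (by positivity)) (by positivity)
  _ = s * (b:ℝ)^(i+1) := by ring

lemma dig_lt (b : ℕ) (hb : 0 < b) (i : ℕ) {s : ℝ} (hs : 0 ≤ s) : dig b i s < b := by
  have hb' : (0:ℝ) < b := by exact_mod_cast hb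
  have h1 : ⌊s * (b:ℝ)^(i+1)⌋₊ < b * ⌊s * (b:ℝ)^i⌋₊ + b := by
    rw [Nat.floor_lt (by positivity)]
    push_cast
    have h2 : s * (b:ℝ)^i < (⌊s * (b:ℝ)^i⌋₊:ℝ) + 1 := Nat.lt_floor_add_one _
    calc s * (b:ℝ)^(i+1) = (b:ℝ) * (s * (b:ℝ)^i) := by ring
    _ < (b:ℝ) * ((⌊s * (b:ℝ)^i⌋₊:ℝ) + 1) := by
        apply mul_lt_mul_of_pos_left h2 hb'
    _ = (b:ℝ)*(⌊s*(b:ℝ)^i⌋₊:ℝ) + b := by ring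
  unfold dig
  omega

lemma dig_cast (b : ℕ) (i : ℕ) {s : ℝ} (hs : 0 ≤ s) :
    (dig b i s : ℝ) = (⌊s * (b:ℝ)^(i+1)⌋₊:ℝ) - (b:ℝ) * (⌊s * (b:ℝ)^i⌋₊:ℝ) := by
  unfold dig
  rw [Nat.cast_sub (floor_mul_le b i hs)]
  push_cast
  ring

lemma dig_sum (b : ℕ) (hb : 2 ≤ b) (I : ℕ) {s : ℝ} (hs0 : 0 ≤ s) (hs1 : s < 1) :
    ∑ i ∈ Finset.range I, (dig b i s : ℝ) / (b:ℝ)^(i+1)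
      = (⌊s * (b:ℝ)^I⌋₊ : ℝ) / (b:ℝ)^I := by
  have hb0 : (0:ℝ) < b := by exact_mod_cast (by omega : 0 < b)
  induction I with
  | zero =>
    simp [Nat.floor_eq_zero.2 hs1]
  | succ I ih =>
    rw [Finset.sum_range_succ, ih, dig_cast b I hs0]
    have hpow : (b:ℝ)^I ≠ 0 := by positivity
    have hpow1 : (b:ℝ)^(I+1) ≠ 0 := by positivity
    field_simp
    ring

lemma floor_approx (b : ℕ) (hb : 0 < b) (I : ℕ) {s : ℝ} (hs : 0 ≤ s) :
    0 ≤ s - (⌊s * (b:ℝ)^I⌋₊ : ℝ) / (b:ℝ)^I ∧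
      s - (⌊s * (b:ℝ)^I⌋₊ : ℝ) / (b:ℝ)^I ≤ ((b:ℝ)^I)⁻¹ := by
  have hb' : (0:ℝ) < b := by exact_mod_cast hb
  have hp : (0:ℝ) < (b:ℝ)^I := by positivity
  have h1 : (⌊s * (b:ℝ)^I⌋₊:ℝ) ≤ s * (b:ℝ)^I := Nat.floor_le (by positivity)
  have h2 : s * (b:ℝ)^I < (⌊s * (b:ℝ)^I⌋₊:ℝ) + 1 := Nat.lt_floor_add_one _
  constructor
  · rw [sub_nonneg, div_le_iff₀ hp]
    exact h1
  · rw [sub_le_iff_le_add]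
    calc s = s * (b:ℝ)^I / (b:ℝ)^I := by field_simp
    _ ≤ ((⌊s * (b:ℝ)^I⌋₊:ℝ) + 1) / (b:ℝ)^I := by
        rw [div_le_div_iff_of_pos_right hp]
        linarith
    _ = ((b:ℝ)^I)⁻¹ + (⌊s * (b:ℝ)^I⌋₊:ℝ) / (b:ℝ)^I := by
        field_simp
        ring

lemma count_indicator {D m : ℕ} (hD : D ≤ m) :
    ∑ c ∈ Finset.range m, (if c + 1 ≤ D then (1:ℝ) else 0) = (D:ℝ) := by
  classical
  rw [Finset.sum_boole]
  have : (Finset.range m).filter (fun c => c + 1 ≤ D) = Finset.range D := by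
    ext c
    simp only [Finset.mem_filter, Finset.mem_range]
    omega
  rw [this, Finset.card_range]

end QBasis


namespace QBasis

variable {X : Type*} [AddCommGroup X] [Module ℝ X] (B : QBasis X)

/-- Master digit-decomposition lemma: a vector with coefficients in `[0,1]` relative to a
family `u` is controlled by the uniform bound on sub-block sums of `u`. -/
lemma digit_master (nb : ℕ) (h2 : 2 ≤ nb) (hκnb : 2 * B.κ ≤ (nb:ℝ))
    (F : Finset ℕ) (t : ℕ → ℝ) (u : ℕ → X) (M' W : ℝ)
    (ht : ∀ n ∈ F, 0 ≤ t n ∧ t n ≤ 1)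
    (hu : ∀ n ∈ F, B.q (u n) ≤ M')
    (hW : 0 ≤ W)
    (hblk : ∀ G ⊆ F, B.q (∑ n ∈ G, u n) ≤ W) :
    B.q (∑ n ∈ F, t n • u n) ≤ 2 * ((nb - 1 : ℕ):ℝ) * B.κ ^ nb * W := by
  classical
  set β : ℝ := (nb : ℝ) with hβdef
  have hβ2 : (2:ℝ) ≤ β := by rw [hβdef]; exact_mod_cast h2
  have hβ0 : (0:ℝ) < β := by linarith
  have hκ1 : (1:ℝ) ≤ B.κ := B.one_le_κ
  have hκ0 : (0:ℝ) < B.κ := B.kap_pos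
  have hκβ : B.κ / β ≤ 1/2 := by
    rw [div_le_div_iff₀ hβ0 (by norm_num)]
    linarith
  have hts : ∀ n ∈ F, 0 ≤ t n / 2 ∧ t n / 2 < 1 := by
    intro n hn
    constructor
    · linarith [(ht n hn).1]
    · linarith [(ht n hn).2]
  set Z : ℕ → X := fun i => ∑ c ∈ Finset.range (nb - 1),
      ∑ n ∈ F.filter (fun n => c + 1 ≤ dig nb i (t n / 2)), u n with hZdef
  set Y₀ : ℝ := ((nb - 1 : ℕ):ℝ) * B.κ ^ (nb - 1) * W with hY₀def
  have hY₀0 : 0 ≤ Y₀ := by positivity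
  have hZbd : ∀ i, B.q (Z i) ≤ Y₀ := by
    intro i
    calc B.q (Z i)
        ≤ ∑ c ∈ Finset.range (nb-1), B.κ ^ (nb - 1 - c) *
            B.q (∑ n ∈ F.filter (fun n => c + 1 ≤ dig nb i (t n / 2)), u n) :=
          B.q_sum_range_le (nb-1) _
      _ ≤ ∑ _c ∈ Finset.range (nb-1), B.κ ^ (nb-1) * W := by
          apply Finset.sum_le_sum
          intro c _
          apply mul_le_mul (pow_le_pow_right₀ hκ1 (by omega))
            (hblk _ (Finset.filter_subset _ _)) (B.q_nonneg _) (by positivity)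
      _ = Y₀ := by
          rw [Finset.sum_const, Finset.card_range, hY₀def, nsmul_eq_mul]
          ring
  -- key decomposition for every truncation depth I
  have key : ∀ I : ℕ, ∑ n ∈ F, t n • u n =
      (∑ i ∈ Finset.range I, (2 / β^(i+1)) • Z i)
      + ∑ n ∈ F, (t n - 2 * ((⌊(t n / 2) * β^I⌋₊ : ℝ) / β^I)) • u n := by
    intro I
    have h1 : ∑ n ∈ F, t n • u n
        = (∑ n ∈ F, (∑ i ∈ Finset.range I, (2 * (dig nb i (t n / 2) : ℝ) / β^(i+1))) • u n)
          + ∑ n ∈ F, (t n - 2 * ((⌊(t n / 2) * β^I⌋₊ : ℝ) / β^I)) • u n := by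
      rw [← Finset.sum_add_distrib]
      apply Finset.sum_congr rfl
      intro n hn
      rw [← add_smul]
      congr 1
      have hd : ∑ i ∈ Finset.range I, ((dig nb i (t n / 2) : ℝ) / β^(i+1))
          = (⌊(t n / 2) * β^I⌋₊:ℝ)/β^I :=
        dig_sum nb h2 I (hts n hn).1 (hts n hn).2
      have h3 : ∑ i ∈ Finset.range I, (2 * (dig nb i (t n / 2):ℝ) / β^(i+1))
          = 2 * ((⌊(t n / 2) * β^I⌋₊:ℝ)/β^I) := by
        rw [← hd, Finset.mul_sum]
        apply Finset.sum_congr rfl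
        intro i _
        ring
      rw [h3]
      ring
    rw [h1]
    congr 1
    -- swap sums and identify the blocks
    have h4 : ∀ n ∈ F, (∑ i ∈ Finset.range I, (2 * (dig nb i (t n / 2) : ℝ) / β^(i+1))) • u n
        = ∑ i ∈ Finset.range I, (2 * (dig nb i (t n / 2) : ℝ) / β^(i+1)) • u n := by
      intro n _
      exact Finset.sum_smul
    rw [Finset.sum_congr rfl h4, Finset.sum_comm]
    apply Finset.sum_congr rfl
    intro i _
    have h5 : ∀ n ∈ F, (2 * (dig nb i (t n / 2) : ℝ) / β^(i+1)) • u n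
        = (2/β^(i+1)) • ((dig nb i (t n / 2) : ℝ) • u n) := by
      intro n _
      rw [smul_smul]
      congr 1
      ring
    rw [Finset.sum_congr rfl h5, ← Finset.smul_sum]
    congr 1
    -- now: ∑_{n∈F} (dig:ℝ) • u n = ∑_c ∑_{filter} u n
    have h6 : ∀ n ∈ F, ((dig nb i (t n / 2) : ℝ)) • u n
        = ∑ c ∈ Finset.range (nb - 1), (if c + 1 ≤ dig nb i (t n / 2) then (1:ℝ) else 0) • u n := by
      intro n hn
      rw [← Finset.sum_smul]
      congr 1
      rw [count_indicator]
      have := dig_lt nb (by omega) i (hts n hn).1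
      omega
    rw [Finset.sum_congr rfl h6, Finset.sum_comm]
    apply Finset.sum_congr rfl
    intro c _
    rw [Finset.sum_filter]
    apply Finset.sum_congr rfl
    intro n _
    by_cases h : c + 1 ≤ dig nb i (t n / 2) <;> simp [h]
  -- bound on the main part
  have hMain : ∀ I, B.q (∑ i ∈ Finset.range I, (2/β^(i+1)) • Z i) ≤ 2 * Y₀ := by
    intro I
    have hre : ∑ i ∈ Finset.range I, (2/β^(i+1)) • Z i
        = ∑ j ∈ Finset.range I, (2/β^((I-1-j)+1)) • Z (I-1-j) :=
      (Finset.sum_range_reflect (fun i => (2/β^(i+1)) • Z i) I).symm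
    rw [hre]
    calc B.q (∑ j ∈ Finset.range I, (2/β^((I-1-j)+1)) • Z (I-1-j))
        ≤ ∑ j ∈ Finset.range I, B.κ^(I-j) * B.q ((2/β^((I-1-j)+1)) • Z (I-1-j)) :=
          B.q_sum_range_le I _
      _ ≤ ∑ j ∈ Finset.range I, (B.κ/β)^(I-j) * (2*Y₀) := by
          apply Finset.sum_le_sum
          intro j hj
          have hj' : j < I := Finset.mem_range.1 hj
          have he : (I-1-j)+1 = I - j := by omega
          rw [he, B.q_smul]
          have habs : |2/β^(I-j)| = 2/β^(I-j) := abs_of_pos (by positivity)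
          rw [habs]
          calc B.κ^(I-j) * (2/β^(I-j) * B.q (Z (I-1-j)))
              ≤ B.κ^(I-j) * (2/β^(I-j) * Y₀) := by
                apply mul_le_mul_of_nonneg_left _ (by positivity)
                apply mul_le_mul_of_nonneg_left (hZbd _) (by positivity)
            _ = (B.κ/β)^(I-j) * (2*Y₀) := by
                rw [div_pow]
                ring
      _ = (∑ j ∈ Finset.range I, (B.κ/β)^(I-j)) * (2*Y₀) := by rw [← Finset.sum_mul]
      _ ≤ 1 * (2*Y₀) := by
          apply mul_le_mul_of_nonneg_right _ (by positivity)
          have hre2 : ∑ j ∈ Finset.range I, (B.κ/β)^(I-j)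
              = ∑ l ∈ Finset.range I, (B.κ/β)^(l+1) := by
            rw [← Finset.sum_range_reflect (fun l => (B.κ/β)^(l+1)) I]
            apply Finset.sum_congr rfl
            intro j hj
            have hj' : j < I := Finset.mem_range.1 hj
            congr 1
            omega
          rw [hre2]
          have h7 : ∀ l ∈ Finset.range I, (B.κ/β)^(l+1) = (B.κ/β) * (B.κ/β)^l := by
            intro l _
            rw [pow_succ]
            ring
          rw [Finset.sum_congr rfl h7, ← Finset.mul_sum]
          have h8 : ∑ l ∈ Finset.range I, (B.κ/β)^l ≤ 2 :=
            geom_half_sum I (by positivity) hκβ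
          calc B.κ/β * ∑ l ∈ Finset.range I, (B.κ/β)^l ≤ (1/2) * 2 := by
                apply mul_le_mul hκβ h8 (Finset.sum_nonneg (fun l _ => by positivity)) (by norm_num)
            _ = 1 := by norm_num
      _ = 2 * Y₀ := by ring
  -- bound on the remainder
  set M₀ : ℝ := max M' 0 with hM₀def
  have hM₀ : 0 ≤ M₀ := le_max_right _ _
  have hRem : ∀ I, B.q (∑ n ∈ F, (t n - 2 * ((⌊(t n / 2) * β^I⌋₊ : ℝ) / β^I)) • u n)
      ≤ B.κ^F.card * ((F.card : ℝ) * ((2/β^I) * M₀)) := by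
    intro I
    have h1 : B.q (∑ n ∈ F, (t n - 2 * ((⌊(t n / 2) * β^I⌋₊ : ℝ) / β^I)) • u n)
        ≤ B.κ^F.card * ∑ n ∈ F, B.q ((t n - 2 * ((⌊(t n / 2) * β^I⌋₊ : ℝ) / β^I)) • u n) :=
      B.q_sum_le_card F _
    have h2 : ∑ n ∈ F, B.q ((t n - 2 * ((⌊(t n / 2) * β^I⌋₊ : ℝ) / β^I)) • u n)
        ≤ ∑ _n ∈ F, (2/β^I) * M₀ := by
      apply Finset.sum_le_sum
      intro n hn
      rw [B.q_smul]
      have happ := floor_approx nb (by omega) I (hts n hn).1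
      rw [← hβdef] at happ
      have habs : |t n - 2 * ((⌊(t n / 2) * β^I⌋₊ : ℝ) / β^I)| ≤ 2/β^I := by
        have e0 : t n - 2 * ((⌊(t n / 2) * β^I⌋₊ : ℝ) / β^I)
            = 2*(t n/2 - (⌊(t n / 2) * β^I⌋₊ : ℝ)/β^I) := by ring
        rw [e0, abs_le]
        have h1' := happ.1
        have h2' := happ.2
        have hpos : (0:ℝ) ≤ 2/β^I := by positivity
        have e2 : 2/β^I = 2*((β^I)⁻¹ : ℝ) := by rw [div_eq_mul_inv]
        constructor
        · linarith
        · linarith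
      have hq : B.q (u n) ≤ M₀ := le_trans (hu n hn) (le_max_left _ _)
      exact mul_le_mul habs hq (B.q_nonneg _) (by positivity)
    have h3 : (∑ _n ∈ F, ((2/β^I) * M₀) : ℝ) = (F.card : ℝ) * ((2/β^I) * M₀) := by
      rw [Finset.sum_const, nsmul_eq_mul]
    calc B.q (∑ n ∈ F, (t n - 2 * ((⌊(t n / 2) * β^I⌋₊ : ℝ) / β^I)) • u n)
        ≤ B.κ^F.card * ∑ n ∈ F, B.q ((t n - 2 * ((⌊(t n / 2) * β^I⌋₊ : ℝ) / β^I)) • u n) := h1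
      _ ≤ B.κ^F.card * ∑ _n ∈ F, (2/β^I) * M₀ := by
          apply mul_le_mul_of_nonneg_left h2 (by positivity)
      _ = B.κ^F.card * ((F.card : ℝ) * ((2/β^I) * M₀)) := by rw [h3]
  -- conclusion via ε-argument
  have hfinal : ∀ ε : ℝ, 0 < ε → B.q (∑ n ∈ F, t n • u n) ≤ 2*((nb-1:ℕ):ℝ)*B.κ^nb*W + ε := by
    intro ε hε
    set K : ℝ := B.κ^(F.card+1) * (F.card * (2 * M₀)) with hKdef
    have hK0 : 0 ≤ K := by positivity
    obtain ⟨I, hI⟩ := exists_pow_lt_of_lt_one (x := ε/(K+1)) (y := 1/β)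
      (by positivity) (by rw [div_lt_one hβ0]; linarith)
    have hKI : K * (1/β)^I < ε := by
      calc K * (1/β)^I ≤ K * (ε/(K+1)) := by
            apply mul_le_mul_of_nonneg_left hI.le hK0
        _ < ε := by
            rw [mul_div_assoc']
            rw [div_lt_iff₀ (by positivity)]
            nlinarith
    calc B.q (∑ n ∈ F, t n • u n)
        = B.q ((∑ i ∈ Finset.range I, (2 / β^(i+1)) • Z i)
            + ∑ n ∈ F, (t n - 2 * ((⌊(t n / 2) * β^I⌋₊ : ℝ) / β^I)) • u n) := by rw [← key I]
      _ ≤ B.κ * (B.q (∑ i ∈ Finset.range I, (2 / β^(i+1)) • Z i)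
            + B.q (∑ n ∈ F, (t n - 2 * ((⌊(t n / 2) * β^I⌋₊ : ℝ) / β^I)) • u n)) := B.q_add _ _
      _ ≤ B.κ * (2*Y₀ + B.κ^F.card * ((F.card : ℝ) * ((2/β^I) * M₀))) := by
          apply mul_le_mul_of_nonneg_left _ hκ0.le
          exact add_le_add (hMain I) (hRem I)
      _ = B.κ * (2*Y₀) + K * (1/β)^I := by
          have e : (1/β : ℝ)^I = ((β^I)⁻¹ : ℝ) := by rw [one_div, inv_pow]
          have e2 : (2/β^I : ℝ) = 2 * ((β^I)⁻¹ : ℝ) := by rw [div_eq_mul_inv]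
          rw [mul_add, hKdef, e, e2, pow_succ]
          ring
      _ ≤ 2*((nb-1:ℕ):ℝ)*B.κ^nb*W + ε := by
          apply add_le_add _ hKI.le
          rw [hY₀def]
          have hnb1 : (nb - 1) + 1 = nb := by omega
          have hp : B.κ ^ nb = B.κ^(nb-1) * B.κ := by rw [← pow_succ, hnb1]
          have heq : B.κ * (2 * (((nb - 1 : ℕ):ℝ) * B.κ ^ (nb - 1) * W))
              = 2*((nb-1:ℕ):ℝ)*B.κ^nb*W := by
            rw [hp]
            ring
          exact le_of_eq heq
  exact le_of_forall_pos_le_add hfinal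

end QBasis


namespace QBasis

variable {X : Type*} [AddCommGroup X] [Module ℝ X] (B : QBasis X)

/-- a convenient natural base for digit expansions -/
noncomputable def nbase : ℕ := max 2 ⌈2 * B.κ⌉₊

lemma nbase_two : 2 ≤ B.nbase := le_max_left _ _

lemma nbase_kap : 2 * B.κ ≤ (B.nbase : ℝ) := by
  calc 2 * B.κ ≤ (⌈2 * B.κ⌉₊ : ℝ) := Nat.le_ceil _
  _ ≤ (B.nbase : ℝ) := by
      have : (⌈2 * B.κ⌉₊ : ℕ) ≤ B.nbase := le_max_right _ _
      exact_mod_cast this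

/-- the constant appearing in the digit lemma -/
noncomputable def Cdig : ℝ := 2 * ((B.nbase - 1 : ℕ):ℝ) * B.κ ^ B.nbase

lemma Cdig_pos : 0 < B.Cdig := by
  unfold Cdig
  have h2 : 2 ≤ B.nbase := B.nbase_two
  have : (0:ℝ) < ((B.nbase - 1 : ℕ):ℝ) := by
    have : 1 ≤ B.nbase - 1 := by omega
    exact_mod_cast (by omega : 0 < B.nbase - 1)
  have hκ := B.kap_pos
  positivity

/-- M4: the truncation `R Aa f` is controlled by a uniform bound on subset projections -/
lemma R_from_S {a : ℝ} (ha : 0 < a) {f : X} (hf : B.inQ f) {Aa : Finset ℕ}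
    (hAa : B.thrSet a f Aa) {W : ℝ} (hW : 0 ≤ W)
    (hblk : ∀ G ⊆ Aa, B.q (B.S G f) ≤ W) :
    B.q (B.R Aa f) ≤ B.Cdig * W := by
  have hCd := B.Cdig_pos
  rcases Aa.eq_empty_or_nonempty with rfl | h
  · rw [B.R_empty, B.q_zero]
    positivity
  · set m := Aa.inf' h fun n => |B.c n f| with hm
    have hma : a ≤ m := Finset.le_inf' h _ (fun n hn => (hAa n).1 hn)
    have hm0 : 0 < m := lt_of_lt_of_le ha hma
    have hmle : ∀ n ∈ Aa, m ≤ |B.c n f| := fun n hn => Finset.inf'_le _ hn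
    have hcne : ∀ n ∈ Aa, B.c n f ≠ 0 := by
      intro n hn
      have := lt_of_lt_of_le hm0 (hmle n hn)
      exact abs_pos.1 this
    obtain ⟨Me, hMe⟩ := B.e_bdd
    have hMe0 : 0 ≤ Me := le_trans (B.q_nonneg _) (hMe 0)
    have hkey : ∑ n ∈ Aa, (m / |B.c n f|) • (B.c n f • B.e n) = B.R Aa f := by
      rw [B.R_eq Aa f h]
      unfold w
      rw [Finset.smul_sum]
      apply Finset.sum_congr rfl
      intro n hn
      rw [smul_smul, smul_smul]
      congr 1
      have hs := sgn_mul_abs (B.c n f)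
      have habs : |B.c n f| ≠ 0 := abs_ne_zero.2 (hcne n hn)
      field_simp
      nlinarith [hs]
    rw [← hkey]
    refine B.digit_master B.nbase B.nbase_two B.nbase_kap Aa (fun n => m / |B.c n f|)
      (fun n => B.c n f • B.e n) Me W ?_ ?_ hW ?_
    · intro n hn
      constructor
      · positivity
      · rw [div_le_one (lt_of_lt_of_le hm0 (hmle n hn))]
        exact hmle n hn
    · intro n hn
      rw [B.q_smul]
      calc |B.c n f| * B.q (B.e n) ≤ 1 * Me :=
        mul_le_mul (hf n) (hMe n) (B.q_nonneg _) (by norm_num)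
      _ = Me := by ring
    · intro G hG
      exact hblk G hG

/-- M3: subset projections are controlled by a uniform bound on subset sign vectors -/
lemma S_from_w {f : X} {Bs : Finset ℕ} (hc1 : ∀ n ∈ Bs, |B.c n f| ≤ 1) {W : ℝ} (hW : 0 ≤ W)
    (hblk : ∀ G ⊆ Bs, B.q (B.w G f) ≤ W) :
    B.q (B.S Bs f) ≤ B.Cdig * W := by
  obtain ⟨Me, hMe⟩ := B.e_bdd
  have hMe0 : 0 ≤ Me := le_trans (B.q_nonneg _) (hMe 0)
  have hkey : ∑ n ∈ Bs, |B.c n f| • (Real.sign (B.c n f) • B.e n) = B.S Bs f := by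
    unfold S
    apply Finset.sum_congr rfl
    intro n hn
    rw [smul_smul]
    congr 1
    rw [mul_comm]
    exact sgn_mul_abs (B.c n f)
  rw [← hkey]
  refine B.digit_master B.nbase B.nbase_two B.nbase_kap Bs (fun n => |B.c n f|)
    (fun n => Real.sign (B.c n f) • B.e n) Me W ?_ ?_ hW ?_
  · intro n hn
    exact ⟨abs_nonneg _, hc1 n hn⟩
  · intro n hn
    rw [B.q_smul]
    calc |Real.sign (B.c n f)| * B.q (B.e n) ≤ 1 * Me :=
      mul_le_mul (abs_sgn_le_one _) (hMe n) (B.q_nonneg _) (by norm_num)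
    _ = Me := by ring
  · intro G hG
    exact hblk G hG

/-- M2: subset sign vectors are controlled by the full sign vector, via `ε`-absorption -/
lemma subset_w_bound {a C : ℝ} (ha : 0 < a) (ha1 : a < 1) (hC1 : 1 ≤ C)
    (hL : ∀ g, B.inQ g → ∀ A : Finset ℕ, B.thrSet a g A → B.q (B.R A g) ≤ C * B.q g)
    {f : X} (hf : B.inQ f) {Aa : Finset ℕ} (hAa : B.thrSet a f Aa)
    {Bs : Finset ℕ} (hBs : Bs ⊆ Aa) :
    B.q (B.w Bs f) ≤ 4 * B.κ * C * B.q (B.w Aa f) := by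
  have hκ1 := B.one_le_κ
  have hκ0 := B.kap_pos
  have hC0 : 0 < C := lt_of_lt_of_le one_pos hC1
  rcases Bs.eq_empty_or_nonempty with rfl | hne
  · rw [B.w_empty, B.q_zero]
    have := B.q_nonneg (B.w Aa f)
    positivity
  · set ε : ℝ := min ((1-a)/2) (1/(4*B.κ*C)) with hεdef
    have hε0 : 0 < ε := by
      apply lt_min
      · linarith
      · positivity
    have hε1 : ε ≤ (1-a)/2 := min_le_left _ _
    have hε2 : ε ≤ 1/(4*B.κ*C) := min_le_right _ _
    have h12ε : (0:ℝ) < 1 + 2*ε := by linarith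
    set s : ℝ := (1+ε)/(1+2*ε) with hsdef
    have hs0 : 0 < s := by positivity
    have hs1 : s < 1 := by
      rw [hsdef, div_lt_one h12ε]
      linarith
    have hsa : a ≤ s := by
      rw [hsdef, le_div_iff₀ h12ε]
      nlinarith
    have hshalf : (1:ℝ)/2 ≤ s := by
      rw [hsdef, div_le_div_iff₀ (by norm_num) h12ε]
      linarith
    -- the test vector
    set x : X := (1/(1+2*ε)) • (B.w Aa f + ε • B.w Bs f) with hxdef
    have hcx : ∀ n, B.c n x = (1/(1+2*ε)) * ((if n ∈ Aa then Real.sign (B.c n f) else 0)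
        + ε * (if n ∈ Bs then Real.sign (B.c n f) else 0)) := by
      intro n
      rw [hxdef, map_smul, smul_eq_mul, map_add, map_smul, smul_eq_mul, B.c_w, B.c_w]
    have hsgn1 : ∀ n ∈ Aa, |Real.sign (B.c n f)| = 1 := by
      intro n hn
      apply abs_sgn_of_ne
      have : 0 < |B.c n f| := lt_of_lt_of_le ha ((hAa n).1 hn)
      exact abs_ne_zero.1 (ne_of_gt this)
    have hinQx : B.inQ x := by
      intro n
      rw [hcx n]
      rw [abs_mul]
      have h1 : |(1:ℝ)/(1+2*ε)| = 1/(1+2*ε) := abs_of_pos (by positivity)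
      rw [h1]
      by_cases hn : n ∈ Aa
      · by_cases hb : n ∈ Bs
        · rw [if_pos hn, if_pos hb]
          have : |Real.sign (B.c n f) + ε * Real.sign (B.c n f)| ≤ 1 + ε := by
            calc |Real.sign (B.c n f) + ε * Real.sign (B.c n f)|
                ≤ |Real.sign (B.c n f)| + |ε * Real.sign (B.c n f)| := abs_add_le _ _
              _ = 1 + ε * 1 := by rw [hsgn1 n hn, abs_mul, abs_of_pos hε0, hsgn1 n hn]
              _ = 1 + ε := by ring
          calc 1/(1+2*ε) * |Real.sign (B.c n f) + ε * Real.sign (B.c n f)|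
              ≤ 1/(1+2*ε) * (1+ε) := by
                apply mul_le_mul_of_nonneg_left this (by positivity)
            _ ≤ 1 := by
                rw [div_mul_eq_mul_div, div_le_one h12ε]
                linarith
        · rw [if_pos hn, if_neg hb]
          rw [mul_zero, add_zero, hsgn1 n hn]
          rw [div_mul_eq_mul_div, div_le_one h12ε]
          linarith
      · have hb : n ∉ Bs := fun hh => hn (hBs hh)
        rw [if_neg hn, if_neg hb]
        simp
    have hthr : B.thrSet s x Bs := by
      intro n
      rw [hcx n]
      by_cases hb : n ∈ Bs
      · have hn : n ∈ Aa := hBs hb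
        rw [if_pos hn, if_pos hb]
        have he : (1:ℝ)/(1+2*ε) * (Real.sign (B.c n f) + ε * Real.sign (B.c n f))
            = ((1+ε)/(1+2*ε)) * Real.sign (B.c n f) := by ring
        rw [he, abs_mul, hsgn1 n hn, mul_one]
        have : |(1+ε)/(1+2*ε)| = s := by
          rw [abs_of_pos (by positivity), hsdef]
        rw [this]
        simp [hb]
      · rw [if_neg hb, mul_zero, add_zero]
        simp only [hb, false_iff, not_le]
        by_cases hn : n ∈ Aa
        · rw [if_pos hn, abs_mul, hsgn1 n hn, mul_one]
          have : |(1:ℝ)/(1+2*ε)| = 1/(1+2*ε) := abs_of_pos (by positivity)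
          rw [this, hsdef]
          rw [div_lt_div_iff₀ h12ε h12ε]
          nlinarith
        · rw [if_neg hn, mul_zero, abs_zero]
          exact hs0
    -- identify R Bs x
    have hwx : B.w Bs x = B.w Bs f := by
      unfold w
      apply Finset.sum_congr rfl
      intro n hn
      congr 1
      rw [hcx n, if_pos (hBs hn), if_pos hn]
      have he : (1:ℝ)/(1+2*ε) * (Real.sign (B.c n f) + ε * Real.sign (B.c n f))
          = ((1+ε)/(1+2*ε)) * Real.sign (B.c n f) := by ring
      rw [he, sgn_mul_pos (by positivity), sgn_sgn]
    have hinfx : (Bs.inf' hne fun n => |B.c n x|) = s := by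
      have : ∀ n ∈ Bs, |B.c n x| = s := by
        intro n hn
        rw [hcx n, if_pos (hBs hn), if_pos hn]
        have he : (1:ℝ)/(1+2*ε) * (Real.sign (B.c n f) + ε * Real.sign (B.c n f))
            = ((1+ε)/(1+2*ε)) * Real.sign (B.c n f) := by ring
        rw [he, abs_mul, hsgn1 n (hBs hn), mul_one, abs_of_pos (by positivity), hsdef]
      rw [Finset.inf'_congr hne rfl this]
      exact Finset.inf'_const hne s
    have hRx : B.R Bs x = s • B.w Bs f := by
      rw [B.R_eq Bs x hne, hwx, hinfx]
    -- apply the truncation bound at level s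
    have hq : B.q (B.R Bs x) ≤ C * B.q x := B.lam_transfer ha hL hsa hinQx hthr
    rw [hRx, B.q_smul, abs_of_pos hs0] at hq
    have hqx : B.q x ≤ B.κ * (B.q (B.w Aa f) + ε * B.q (B.w Bs f)) := by
      rw [hxdef, B.q_smul]
      have h1 : |(1:ℝ)/(1+2*ε)| = 1/(1+2*ε) := abs_of_pos (by positivity)
      rw [h1]
      have h2 : B.q (B.w Aa f + ε • B.w Bs f) ≤ B.κ * (B.q (B.w Aa f) + ε * B.q (B.w Bs f)) := by
        calc B.q (B.w Aa f + ε • B.w Bs f) ≤ B.κ * (B.q (B.w Aa f) + B.q (ε • B.w Bs f)) :=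
            B.q_add _ _
          _ = B.κ * (B.q (B.w Aa f) + ε * B.q (B.w Bs f)) := by
              rw [B.q_smul, abs_of_pos hε0]
      have h3 : (1:ℝ)/(1+2*ε) ≤ 1 := by
        rw [div_le_one h12ε]; linarith
      calc 1/(1+2*ε) * B.q (B.w Aa f + ε • B.w Bs f)
          ≤ 1 * (B.κ * (B.q (B.w Aa f) + ε * B.q (B.w Bs f))) := by
            apply mul_le_mul h3 h2 (B.q_nonneg _) (by norm_num)
        _ = B.κ * (B.q (B.w Aa f) + ε * B.q (B.w Bs f)) := one_mul _
    -- absorption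
    have hwBs0 : 0 ≤ B.q (B.w Bs f) := B.q_nonneg _
    have hwAa0 : 0 ≤ B.q (B.w Aa f) := B.q_nonneg _
    have hq2 : B.q (B.w Bs f) ≤ 2 * (C * B.q x) := by
      nlinarith [B.q_nonneg x]
    have hq3 : B.q (B.w Bs f) ≤ 2*C*B.κ * B.q (B.w Aa f) + 2*C*B.κ*ε * B.q (B.w Bs f) := by
      have := mul_le_mul_of_nonneg_left hqx (by positivity : (0:ℝ) ≤ 2*C)
      nlinarith
    have hhalf : 2*C*B.κ*ε ≤ 1/2 := by
      have hfe : 2*C*B.κ*(1/(4*B.κ*C)) = 1/2 := by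
        field_simp
        ring
      calc 2*C*B.κ*ε ≤ 2*C*B.κ*(1/(4*B.κ*C)) := by
            apply mul_le_mul_of_nonneg_left hε2 (by positivity)
        _ = 1/2 := hfe
    have hq4 : 2*C*B.κ*ε * B.q (B.w Bs f) ≤ (1/2) * B.q (B.w Bs f) :=
      mul_le_mul_of_nonneg_right hhalf hwBs0
    have : B.q (B.w Bs f) ≤ 4*B.κ*C * B.q (B.w Aa f) := by nlinarith
    exact this

end QBasis


namespace QBasis

variable {X : Type*} [AddCommGroup X] [Module ℝ X] (B : QBasis X)

/-- M5: truncations at level `a` are controlled linearly by thresholding projections,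
with a fixed-level truncation constant. -/
lemma band_lemma {a : ℝ} (ha : 0 < a) (ha1 : a < 1) {Cθ L : ℝ}
    (hCθ0 : 0 ≤ Cθ)
    (hθ : ∀ g, B.inQ g → ∀ A : Finset ℕ, B.thrSet a g A → B.q (B.S A g) ≤ Cθ * B.q g)
    (hL0 : 0 ≤ L)
    (hLf : ∀ g, B.inQ g → ∀ A : Finset ℕ, B.thrSet ((2*B.κ)⁻¹) g A → B.q (B.R A g) ≤ L * B.q g)
    {f : X} (hf : B.inQ f) {Aa : Finset ℕ} (hAa : B.thrSet a f Aa) :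
    B.q (B.R Aa f) ≤ 4 * B.κ^3 * L * (1 + Cθ) * B.q f := by
  classical
  have hκ1 := B.one_le_κ
  have hκ0 := B.kap_pos
  set bR : ℝ := 2*B.κ with hbRdef
  have hbR2 : (2:ℝ) ≤ bR := by rw [hbRdef]; linarith
  have hbR0 : (0:ℝ) < bR := by linarith
  have hbR1 : (1:ℝ) < bR := by linarith
  have hbRinv1 : bR⁻¹ < 1 := by
    rw [inv_lt_one_iff₀]
    right; exact hbR1
  have hbRinv0 : (0:ℝ) < bR⁻¹ := by positivity
  have hq0 := B.q_nonneg f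
  rcases Aa.eq_empty_or_nonempty with rfl | h
  · rw [B.R_empty, B.q_zero]
    positivity
  set m : ℝ := Aa.inf' h fun n => |B.c n f| with hm
  have hma : a ≤ m := Finset.le_inf' h _ (fun n hn => (hAa n).1 hn)
  have hm0 : 0 < m := lt_of_lt_of_le ha hma
  have hmle : ∀ n ∈ Aa, m ≤ |B.c n f| := fun n hn => Finset.inf'_le _ hn
  have hm1 : m ≤ 1 := by
    obtain ⟨n₀, hn₀⟩ := h
    exact le_trans (hmle n₀ hn₀) (hf n₀)
  -- levels
  set sl : ℕ → ℝ := fun k => max (bR⁻¹^k) a with hsl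
  have hsl_pos : ∀ k, 0 < sl k := fun k => lt_of_lt_of_le ha (le_max_right _ _)
  have hsl_ge_a : ∀ k, a ≤ sl k := fun k => le_max_right _ _
  have hsl_low : ∀ k, bR⁻¹^k ≤ sl k := fun k => le_max_left _ _
  have hsl_lt_one : ∀ k, 1 ≤ k → sl k < 1 := by
    intro k hk
    apply max_lt _ ha1
    calc bR⁻¹^k ≤ bR⁻¹^1 := pow_le_pow_of_le_one hbRinv0.le hbRinv1.le hk
    _ = bR⁻¹ := pow_one _
    _ < 1 := hbRinv1
  have hsl_anti : ∀ k, sl (k+1) ≤ sl k := by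
    intro k
    apply max_le_max _ le_rfl
    exact pow_le_pow_of_le_one hbRinv0.le hbRinv1.le (by omega)
  have hsl_ratio : ∀ k, sl k ≤ bR * sl (k+1) := by
    intro k
    apply max_le
    · have : bR⁻¹^k = bR * bR⁻¹^(k+1) := by
        rw [pow_succ]
        field_simp
      rw [this]
      apply mul_le_mul_of_nonneg_left (le_max_left _ _) hbR0.le
    · calc a ≤ bR * a := by nlinarith
      _ ≤ bR * sl (k+1) := mul_le_mul_of_nonneg_left (le_max_right _ _) hbR0.le
  have hsl_inv : ∀ k, (sl k)⁻¹ ≤ bR^k := by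
    intro k
    have h1 : (bR^k)⁻¹ ≤ sl k := by
      rw [← inv_pow]
      exact hsl_low k
    calc (sl k)⁻¹ ≤ ((bR^k)⁻¹)⁻¹ := inv_anti₀ (by positivity) h1
    _ = bR^k := inv_inv _
  -- the nested threshold sets
  set T : ℕ → Finset ℕ := fun k => if k = 0 then (∅ : Finset ℕ)
      else Aa.filter (fun n => sl k ≤ |B.c n f|) with hT
  have hT0 : T 0 = ∅ := by simp [hT]
  have hTmem : ∀ k, 1 ≤ k → ∀ n, n ∈ T k ↔ sl k ≤ |B.c n f| := by
    intro k hk n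
    rw [hT]
    simp only [if_neg (by omega : ¬ k = 0), Finset.mem_filter]
    constructor
    · exact fun hh => hh.2
    · intro hh
      exact ⟨(hAa n).2 (le_trans (hsl_ge_a k) hh), hh⟩
  have hTsub : ∀ k, T k ⊆ T (k+1) := by
    intro k
    rcases Nat.eq_zero_or_pos k with rfl | hk
    · rw [hT0]
      exact Finset.empty_subset _
    · intro n hn
      rw [hTmem (k+1) (by omega)]
      exact le_trans (hsl_anti k) ((hTmem k hk n).1 hn)
  -- off-T coefficient bound
  have hoff : ∀ k n, n ∉ T k → |B.c n f| ≤ bR * sl (k+1) := by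
    intro k n hn
    rcases Nat.eq_zero_or_pos k with rfl | hk
    · calc |B.c n f| ≤ 1 := hf n
      _ = bR * bR⁻¹ := by field_simp
      _ ≤ bR * sl 1 := by
          apply mul_le_mul_of_nonneg_left _ hbR0.le
          calc bR⁻¹ = bR⁻¹^1 := (pow_one _).symm
          _ ≤ sl 1 := hsl_low 1
    · have : ¬ sl k ≤ |B.c n f| := fun hh => hn ((hTmem k hk n).2 hh)
      calc |B.c n f| ≤ sl k := le_of_not_ge this
      _ ≤ bR * sl (k+1) := hsl_ratio k
  -- tail bound
  have htail : ∀ k, B.q (f - B.S (T k) f) ≤ B.κ * (1 + Cθ) * B.q f := by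
    intro k
    rcases Nat.eq_zero_or_pos k with rfl | hk
    · rw [hT0, B.S_empty, sub_zero]
      have h1 : B.q f ≤ B.κ * B.q f := by nlinarith
      have h2 : 0 ≤ B.κ * Cθ * B.q f := by positivity
      nlinarith
    · have hS : B.q (B.S (T k) f) ≤ Cθ * B.q f := by
        apply B.theta_transfer ha hθ (hsl_ge_a k) hf
        exact fun n => hTmem k hk n
      calc B.q (f - B.S (T k) f) ≤ B.κ * (B.q f + B.q (B.S (T k) f)) := B.q_sub_le _ _
      _ ≤ B.κ * (B.q f + Cθ * B.q f) := by nlinarith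
      _ = B.κ * (1 + Cθ) * B.q f := by ring
  -- per-band bound
  set D : ℝ := B.κ * L * (1 + Cθ) * B.q f with hD
  have hD0 : 0 ≤ D := by positivity
  have hband : ∀ k, B.q (m • B.w (T (k+1) \ T k) f) ≤ m * bR^(k+1) * D := by
    intro k
    set Bk : Finset ℕ := T (k+1) \ T k with hBkdef
    rcases Bk.eq_empty_or_nonempty with hBk | hBk
    · rw [hBk, B.w_empty, smul_zero, B.q_zero]
      positivity
    · set gk : X := (1/(bR * sl (k+1))) • (f - B.S (T k) f) with hgk
      have hslk := hsl_pos (k+1)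
      have hcg : ∀ n, B.c n gk = (1/(bR * sl (k+1))) * (if n ∈ T k then 0 else B.c n f) := by
        intro n
        rw [hgk, map_smul, smul_eq_mul, map_sub, B.c_S]
        by_cases hh : n ∈ T k <;> simp [hh]
      have habs : ∀ n, |B.c n gk| = (1/(bR * sl (k+1))) * (if n ∈ T k then 0 else |B.c n f|) := by
        intro n
        rw [hcg n, abs_mul, abs_of_pos (by positivity : (0:ℝ) < 1/(bR * sl (k+1)))]
        by_cases hh : n ∈ T k <;> simp [hh]
      have hgkQ : B.inQ gk := by
        intro n
        rw [habs n]
        by_cases hh : n ∈ T k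
        · simp [hh]
        · rw [if_neg hh]
          rw [div_mul_eq_mul_div, one_mul, div_le_one (by positivity)]
          exact hoff k n hh
      have hthr : B.thrSet (bR⁻¹) gk Bk := by
        intro n
        rw [habs n]
        constructor
        · intro hn
          rw [hBkdef, Finset.mem_sdiff] at hn
          rw [if_neg hn.2]
          have h1 : sl (k+1) ≤ |B.c n f| := (hTmem (k+1) (by omega) n).1 hn.1
          rw [div_mul_eq_mul_div, one_mul, le_div_iff₀ (by positivity)]
          calc bR⁻¹ * (bR * sl (k+1)) = sl (k+1) := by field_simp
          _ ≤ |B.c n f| := h1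
        · intro hn
          by_cases hh : n ∈ T k
          · rw [if_pos hh, mul_zero] at hn
            exact absurd hn (not_le.2 hbRinv0)
          · rw [if_neg hh, div_mul_eq_mul_div, one_mul, le_div_iff₀ (by positivity)] at hn
            have h1 : sl (k+1) ≤ |B.c n f| := by
              calc sl (k+1) = bR⁻¹ * (bR * sl (k+1)) := by field_simp
              _ ≤ |B.c n f| := hn
            rw [hBkdef, Finset.mem_sdiff]
            exact ⟨(hTmem (k+1) (by omega) n).2 h1, hh⟩
      have hwg : B.w Bk gk = B.w Bk f := by
        unfold w
        apply Finset.sum_congr rfl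
        intro n hn
        have hh : n ∉ T k := by
          rw [hBkdef, Finset.mem_sdiff] at hn
          exact hn.2
        congr 1
        rw [hcg n, if_neg hh]
        exact sgn_mul_pos (by positivity)
      have hinf : bR⁻¹ ≤ Bk.inf' hBk fun n => |B.c n gk| :=
        Finset.le_inf' hBk _ (fun n hn => (hthr n).1 hn)
      have hRg : B.q (B.R Bk gk) ≤ L * B.q gk := hLf gk hgkQ Bk hthr
      rw [B.R_eq Bk gk hBk, hwg, B.q_smul] at hRg
      have hinfpos : 0 < Bk.inf' hBk fun n => |B.c n gk| := lt_of_lt_of_le hbRinv0 hinf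
      rw [abs_of_pos hinfpos] at hRg
      have hqgk : B.q gk ≤ (1/(bR * sl (k+1))) * (B.κ * (1 + Cθ) * B.q f) := by
        rw [hgk, B.q_smul, abs_of_pos (by positivity : (0:ℝ) < 1/(bR * sl (k+1)))]
        apply mul_le_mul_of_nonneg_left (htail k) (by positivity)
      have hwbound : B.q (B.w Bk f) ≤ bR * (L * B.q gk) := by
        have h1 : bR⁻¹ * B.q (B.w Bk f) ≤ (Bk.inf' hBk fun n => |B.c n gk|) * B.q (B.w Bk f) :=
          mul_le_mul_of_nonneg_right hinf (B.q_nonneg _)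
        have h2 : bR⁻¹ * B.q (B.w Bk f) ≤ L * B.q gk := le_trans h1 hRg
        calc B.q (B.w Bk f) = bR * (bR⁻¹ * B.q (B.w Bk f)) := by field_simp
        _ ≤ bR * (L * B.q gk) := mul_le_mul_of_nonneg_left h2 hbR0.le
      rw [B.q_smul, abs_of_pos hm0]
      calc m * B.q (B.w Bk f) ≤ m * (bR * (L * ((1/(bR * sl (k+1))) * (B.κ * (1 + Cθ) * B.q f)))) := by
            apply mul_le_mul_of_nonneg_left _ hm0.le
            calc B.q (B.w Bk f) ≤ bR * (L * B.q gk) := hwbound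
            _ ≤ bR * (L * ((1/(bR * sl (k+1))) * (B.κ * (1 + Cθ) * B.q f))) := by
                apply mul_le_mul_of_nonneg_left _ hbR0.le
                exact mul_le_mul_of_nonneg_left hqgk hL0
      _ = m * (sl (k+1))⁻¹ * D := by
          rw [hD]
          field_simp
      _ ≤ m * bR^(k+1) * D := by
          apply mul_le_mul_of_nonneg_right _ hD0
          exact mul_le_mul_of_nonneg_left (hsl_inv (k+1)) hm0.le
  -- induction along the chain
  have hind : ∀ k, B.q (m • B.w (T k) f) ≤ 2 * B.κ * (m * bR^k * D) := by
    intro k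
    induction k with
    | zero =>
      rw [hT0, B.w_empty, smul_zero, B.q_zero]
      positivity
    | succ k ih =>
      have hsplit : B.w (T (k+1)) f = B.w (T (k+1) \ T k) f + B.w (T k) f := by
        unfold w
        exact (Finset.sum_sdiff (hTsub k)).symm
      have e1 : m • B.w (T (k+1)) f = m • B.w (T (k+1) \ T k) f + m • B.w (T k) f := by
        rw [hsplit, smul_add]
      rw [e1]
      have e2 : bR^(k+1) = bR^k * bR := pow_succ _ _
      calc B.q (m • B.w (T (k+1) \ T k) f + m • B.w (T k) f)
          ≤ B.κ * (B.q (m • B.w (T (k+1) \ T k) f) + B.q (m • B.w (T k) f)) := B.q_add _ _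
        _ ≤ B.κ * (m * bR^(k+1) * D + 2 * B.κ * (m * bR^k * D)) := by
            apply mul_le_mul_of_nonneg_left _ hκ0.le
            exact add_le_add (hband k) ih
        _ = 2 * B.κ * (m * bR^(k+1) * D) := by
            rw [e2, hbRdef]
            ring
  -- the stopping index
  have hex : ∃ k : ℕ, sl (k+1) ≤ m := by
    obtain ⟨k, hk⟩ := exists_pow_lt_of_lt_one hm0 hbRinv1
    refine ⟨k, max_le ?_ hma⟩
    calc bR⁻¹^(k+1) ≤ bR⁻¹^k := pow_le_pow_of_le_one hbRinv0.le hbRinv1.le (by omega)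
    _ ≤ m := hk.le
  set khat : ℕ := Nat.find hex + 1 with hkhat
  have hkh : sl khat ≤ m := Nat.find_spec hex
  have hTfull : T khat = Aa := by
    rw [hT]
    simp only [if_neg (by omega : ¬ khat = 0)]
    apply Finset.filter_true_of_mem
    intro n hn
    exact le_trans hkh (hmle n hn)
  have hmb : m * bR^khat ≤ bR := by
    rcases Nat.eq_zero_or_pos (Nat.find hex) with hf0 | hf0
    · rw [hkhat, hf0]
      rw [pow_one]
      nlinarith
    · obtain ⟨j, hj⟩ := Nat.exists_eq_succ_of_ne_zero (by omega : Nat.find hex ≠ 0)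
      have hmin : ¬ sl (j+1) ≤ m := Nat.find_min hex (by omega)
      have hlt : m < sl (j+1) := lt_of_not_ge hmin
      have hlt2 : m < bR⁻¹^(j+1) := by
        rcases lt_max_iff.1 hlt with hh | hh
        · exact hh
        · exact absurd hh (not_lt.2 hma)
      have hkh2 : khat = j + 2 := by omega
      rw [hkh2]
      have : bR⁻¹^(j+1) * bR^(j+2) = bR := by
        have hp : bR^(j+2) = bR^(j+1) * bR := pow_succ _ _
        rw [inv_pow, hp, ← mul_assoc, inv_mul_cancel₀ (by positivity), one_mul]
      calc m * bR^(j+2) ≤ bR⁻¹^(j+1) * bR^(j+2) := by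
            apply mul_le_mul_of_nonneg_right hlt2.le (by positivity)
      _ = bR := this
  -- conclusion
  have hfin : B.q (B.R Aa f) = B.q (m • B.w Aa f) := by
    rw [B.R_eq Aa f h]
  rw [hfin, ← hTfull]
  calc B.q (m • B.w (T khat) f) ≤ 2 * B.κ * (m * bR^khat * D) := hind khat
  _ ≤ 2 * B.κ * (bR * D) := by
      apply mul_le_mul_of_nonneg_left _ (by positivity)
      exact mul_le_mul_of_nonneg_right hmb hD0
  _ = 4 * B.κ^3 * L * (1 + Cθ) * B.q f := by
      rw [hD, hbRdef]
      ring

end QBasis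


namespace QBasis

variable {X : Type*} [AddCommGroup X] [Module ℝ X] (B : QBasis X)

lemma abs_add_sgn {x : ℝ} (hx : x ≠ 0) : |x + Real.sign x| = |x| + 1 := by
  rcases lt_or_gt_of_ne hx with h | h
  · rw [Real.sign_of_neg h, abs_of_neg h, abs_of_neg (by linarith : x + (-1:ℝ) < 0)]
    ring
  · rw [Real.sign_of_pos h, abs_of_pos h, abs_of_pos (by linarith : (0:ℝ) < x + 1)]

lemma abs_sub_three_sgn {x : ℝ} (hx1 : |x| ≤ 1) (hx : x ≠ 0) :
    |x - 3 * Real.sign x| = 3 - |x| := by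
  rcases lt_or_gt_of_ne hx with h | h
  · rw [Real.sign_of_neg h, abs_of_neg h]
    rw [abs_of_pos]
    · ring
    · have : -x ≤ 1 := by rw [abs_of_neg h] at hx1; linarith
      nlinarith
  · rw [Real.sign_of_pos h, abs_of_pos h]
    rw [abs_of_neg]
    · ring
    · have : x ≤ 1 := by rw [abs_of_pos h] at hx1; linarith
      nlinarith

/-- the `φ ≲ λ/a` bound via the fixed-level `1/2` bootstrap -/
lemma phi_bound {a L P : ℝ} (ha : 0 < a) (ha1 : a < 1) (hL1 : 1 ≤ L) (hP0 : 0 ≤ P)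
    (hL : ∀ g, B.inQ g → ∀ A : Finset ℕ, B.thrSet a g A → B.q (B.R A g) ≤ L * B.q g)
    (hP : ∀ g, B.inQ g → ∀ Aa A : Finset ℕ, B.thrSet (1/2) g Aa → A ⊆ Aa →
      B.q (B.S A g) ≤ P * B.q g)
    {f : X} (hf : B.inQ f) {Aa : Finset ℕ} (hAa : B.thrSet a f Aa)
    {Bs : Finset ℕ} (hBs : Bs ⊆ Aa) :
    B.q (B.S Bs f) ≤ 5/2 * B.κ^2 * P * (L / a) * B.q f := by
  have hκ1 := B.one_le_κ
  have hκ0 := B.kap_pos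
  have hq0 := B.q_nonneg f
  have hL0 : (0:ℝ) < L := lt_of_lt_of_le one_pos hL1
  have hcne : ∀ n ∈ Aa, B.c n f ≠ 0 := by
    intro n hn
    have : 0 < |B.c n f| := lt_of_lt_of_le ha ((hAa n).1 hn)
    exact abs_ne_zero.1 (ne_of_gt this)
  have hW : B.q (B.w Aa f) ≤ (L / a) * B.q f := by
    have := B.w_bound ha hL0.le hL hf hAa
    calc B.q (B.w Aa f) ≤ L / a * B.q f := this
    _ = (L / a) * B.q f := rfl
  have hLa1 : 1 ≤ L / a := by
    rw [le_div_iff₀ ha]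
    nlinarith
  have hqle : B.q f ≤ (L / a) * B.q f := by nlinarith
  -- the two auxiliary vectors
  set g : X := (1/2 : ℝ) • (f + B.w Aa f) with hg
  set g' : X := (1/4 : ℝ) • (f - (3:ℝ) • B.w Aa f) with hg'
  have hcg : ∀ n, B.c n g = (1/2) * (B.c n f + (if n ∈ Aa then Real.sign (B.c n f) else 0)) := by
    intro n
    rw [hg, map_smul, smul_eq_mul, map_add, B.c_w]
  have hcg' : ∀ n, B.c n g' = (1/4) * (B.c n f - 3 * (if n ∈ Aa then Real.sign (B.c n f) else 0)) := by
    intro n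
    rw [hg', map_smul, smul_eq_mul, map_sub, map_smul, smul_eq_mul, B.c_w]
  have habsg : ∀ n ∈ Aa, |B.c n g| = (|B.c n f| + 1) / 2 := by
    intro n hn
    rw [hcg n, if_pos hn, abs_mul, abs_add_sgn (hcne n hn),
      abs_of_pos (by norm_num : (0:ℝ) < 1/2)]
    ring
  have habsg' : ∀ n ∈ Aa, |B.c n g'| = (3 - |B.c n f|) / 4 := by
    intro n hn
    rw [hcg' n, if_pos hn, abs_mul, abs_sub_three_sgn (hf n) (hcne n hn),
      abs_of_pos (by norm_num : (0:ℝ) < 1/4)]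
    ring
  have hinQg : B.inQ g := by
    intro n
    by_cases hn : n ∈ Aa
    · rw [habsg n hn]
      have := hf n
      linarith
    · rw [hcg n, if_neg hn, add_zero, abs_mul]
      have := hf n
      rw [abs_of_pos (by norm_num : (0:ℝ) < 1/2)]
      linarith
  have hinQg' : B.inQ g' := by
    intro n
    by_cases hn : n ∈ Aa
    · rw [habsg' n hn]
      have := abs_nonneg (B.c n f)
      linarith
    · rw [hcg' n, if_neg hn, mul_zero, sub_zero, abs_mul]
      have := hf n
      rw [abs_of_pos (by norm_num : (0:ℝ) < 1/4)]
      linarith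
  have hthrg : B.thrSet (1/2) g Aa := by
    intro n
    by_cases hn : n ∈ Aa
    · simp only [hn, true_iff]
      rw [habsg n hn]
      have := abs_nonneg (B.c n f)
      linarith
    · simp only [hn, false_iff, not_le]
      rw [hcg n, if_neg hn, add_zero, abs_mul]
      have h1 : |B.c n f| < a := by
        by_contra hcon
        exact hn ((hAa n).2 (le_of_not_gt hcon))
      rw [abs_of_pos (by norm_num : (0:ℝ) < 1/2)]
      linarith
  have hthrg' : B.thrSet (1/2) g' Aa := by
    intro n
    by_cases hn : n ∈ Aa
    · simp only [hn, true_iff]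
      rw [habsg' n hn]
      have := hf n
      linarith
    · simp only [hn, false_iff, not_le]
      rw [hcg' n, if_neg hn, mul_zero, sub_zero, abs_mul]
      have h1 : |B.c n f| < a := by
        by_contra hcon
        exact hn ((hAa n).2 (le_of_not_gt hcon))
      rw [abs_of_pos (by norm_num : (0:ℝ) < 1/4)]
      linarith
  -- projections of the auxiliary vectors
  have hSg : B.S Bs g = (1/2 : ℝ) • (B.S Bs f + B.w Bs f) := by
    unfold S w
    rw [smul_add, Finset.smul_sum, Finset.smul_sum, ← Finset.sum_add_distrib]
    apply Finset.sum_congr rfl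
    intro n hn
    rw [hcg n, if_pos (hBs hn), smul_smul, smul_smul, ← add_smul]
    congr 1
    ring
  have hSg' : B.S Bs g' = (1/4 : ℝ) • (B.S Bs f - (3:ℝ) • B.w Bs f) := by
    unfold S w
    rw [smul_sub, Finset.smul_sum, Finset.smul_sum, Finset.smul_sum, ← Finset.sum_sub_distrib]
    apply Finset.sum_congr rfl
    intro n hn
    rw [hcg' n, if_pos (hBs hn), smul_smul, smul_smul, smul_smul, ← sub_smul]
    congr 1
    ring
  have hid : B.S Bs f = (3/2 : ℝ) • B.S Bs g + B.S Bs g' := by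
    rw [hSg, hSg']
    module
  -- norms of the auxiliary vectors
  have hqg : B.q g ≤ B.κ * ((L/a) * B.q f) := by
    rw [hg, B.q_smul, abs_of_pos (by norm_num : (0:ℝ) < 1/2)]
    have h1 : B.q (f + B.w Aa f) ≤ B.κ * (B.q f + B.q (B.w Aa f)) := B.q_add _ _
    have h2 : B.q f + B.q (B.w Aa f) ≤ 2 * ((L/a) * B.q f) := by linarith
    nlinarith
  have hqg' : B.q g' ≤ B.κ * ((L/a) * B.q f) := by
    rw [hg', B.q_smul, abs_of_pos (by norm_num : (0:ℝ) < 1/4)]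
    have h1 : B.q (f - (3:ℝ) • B.w Aa f) ≤ B.κ * (B.q f + B.q ((3:ℝ) • B.w Aa f)) :=
      B.q_sub_le _ _
    have h3 : B.q ((3:ℝ) • B.w Aa f) = 3 * B.q (B.w Aa f) := by
      rw [B.q_smul, abs_of_pos (by norm_num : (0:ℝ) < 3)]
    rw [h3] at h1
    have h2 : B.q f + 3 * B.q (B.w Aa f) ≤ 4 * ((L/a) * B.q f) := by linarith
    nlinarith
  -- conclusion
  have h1 : B.q (B.S Bs g) ≤ P * B.q g := hP g hinQg Aa Bs hthrg hBs
  have h2 : B.q (B.S Bs g') ≤ P * B.q g' := hP g' hinQg' Aa Bs hthrg' hBs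
  have h3 : P * B.q g ≤ P * (B.κ * ((L/a) * B.q f)) := mul_le_mul_of_nonneg_left hqg hP0
  have h4 : P * B.q g' ≤ P * (B.κ * ((L/a) * B.q f)) := mul_le_mul_of_nonneg_left hqg' hP0
  calc B.q (B.S Bs f) = B.q ((3/2 : ℝ) • B.S Bs g + B.S Bs g') := by rw [← hid]
  _ ≤ B.κ * (B.q ((3/2 : ℝ) • B.S Bs g) + B.q (B.S Bs g')) := B.q_add _ _
  _ = B.κ * ((3/2) * B.q (B.S Bs g) + B.q (B.S Bs g')) := by
      rw [B.q_smul, abs_of_pos (by norm_num : (0:ℝ) < 3/2)]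
  _ ≤ B.κ * ((3/2) * (P * (B.κ * ((L/a) * B.q f))) + P * (B.κ * ((L/a) * B.q f))) := by
      apply mul_le_mul_of_nonneg_left _ hκ0.le
      apply add_le_add _ (le_trans h2 h4)
      apply mul_le_mul_of_nonneg_left (le_trans h1 h3) (by norm_num)
  _ = 5/2 * B.κ^2 * P * (L / a) * B.q f := by ring

end QBasis


/-- a basis of a quasi-Banach space is nearly unconditional if and only if
it is nearly truncation quasi-greedy; moreover `λ(a) ≲ θ(a) ≲ φ(a) ≲ a⁻¹ λ(a)` on
`(0,1)` with implicit constants independent of `a`. -/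
theorem stmt3 {X : Type*} [AddCommGroup X] [Module ℝ X] (B : QBasis X) :
    (B.NearlyUnconditional ↔ B.NearlyTQG) ∧
    ∀ lam theta phi : ℝ → ℝ, B.NTQGFun lam → B.ThetaFun theta → B.NUFun phi →
      ∃ C₁ C₂ C₃ : ℝ, 0 < C₁ ∧ 0 < C₂ ∧ 0 < C₃ ∧
        ∀ a ∈ Set.Ioo (0 : ℝ) 1,
          lam a ≤ C₁ * theta a ∧ theta a ≤ C₂ * phi a ∧ phi a ≤ C₃ * (lam a / a) := by
  constructor
  · -- the equivalence
    constructor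
    · -- nearly unconditional → nearly truncation quasi-greedy
      intro hNU a ha
      obtain ⟨C, hC⟩ := hNU a ha
      set Cp : ℝ := max C 0 with hCpdef
      have hCp0 : 0 ≤ Cp := le_max_right _ _
      refine ⟨B.Cdig * Cp, ?_⟩
      intro f hf Aa hAa
      have hblk : ∀ G ⊆ Aa, B.q (B.S G f) ≤ Cp * B.q f := by
        intro G hG
        calc B.q (B.S G f) ≤ C * B.q f := hC f hf Aa G hAa hG
        _ ≤ Cp * B.q f := mul_le_mul_of_nonneg_right (le_max_left _ _) (B.q_nonneg f)
      have hW0 : 0 ≤ Cp * B.q f := mul_nonneg hCp0 (B.q_nonneg f)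
      calc B.q (B.R Aa f) ≤ B.Cdig * (Cp * B.q f) := B.R_from_S ha.1 hf hAa hW0 hblk
      _ = B.Cdig * Cp * B.q f := by ring
    · -- nearly truncation quasi-greedy → nearly unconditional
      intro hNT a ha
      obtain ⟨C, hC⟩ := hNT a ha
      set Cp : ℝ := max C 1 with hCpdef
      have hCp1 : (1:ℝ) ≤ Cp := le_max_right _ _
      have hCp0 : (0:ℝ) ≤ Cp := by linarith
      have hCpv : ∀ g, B.inQ g → ∀ A : Finset ℕ, B.thrSet a g A → B.q (B.R A g) ≤ Cp * B.q g := by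
        intro g hg A hA
        calc B.q (B.R A g) ≤ C * B.q g := hC g hg A hA
        _ ≤ Cp * B.q g := mul_le_mul_of_nonneg_right (le_max_left _ _) (B.q_nonneg g)
      refine ⟨B.Cdig * (4 * B.κ * Cp * (Cp / a)), ?_⟩
      intro f hf Aa Bs hAa hBs
      have hq0 := B.q_nonneg f
      have hWb : B.q (B.w Aa f) ≤ Cp / a * B.q f := B.w_bound ha.1 hCp0 hCpv hf hAa
      have hblk : ∀ G ⊆ Bs, B.q (B.w G f) ≤ 4 * B.κ * Cp * (Cp / a) * B.q f := by
        intro G hG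
        calc B.q (B.w G f) ≤ 4 * B.κ * Cp * B.q (B.w Aa f) :=
            B.subset_w_bound ha.1 ha.2 hCp1 hCpv hf hAa (hG.trans hBs)
        _ ≤ 4 * B.κ * Cp * (Cp / a * B.q f) := by
            apply mul_le_mul_of_nonneg_left hWb
            have := B.kap_pos
            positivity
        _ = 4 * B.κ * Cp * (Cp / a) * B.q f := by ring
      have hW0 : 0 ≤ 4 * B.κ * Cp * (Cp / a) * B.q f := by
        apply mul_nonneg _ hq0
        apply mul_nonneg _ (div_nonneg hCp0 ha.1.le)
        apply mul_nonneg _ hCp0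
        have := B.kap_pos
        positivity
      calc B.q (B.S Bs f) ≤ B.Cdig * (4 * B.κ * Cp * (Cp / a) * B.q f) :=
          B.S_from_w (fun n _ => hf n) hW0 hblk
      _ = B.Cdig * (4 * B.κ * Cp * (Cp / a)) * B.q f := by ring
  · -- the quantitative chain
    intro lam theta phi hlam htheta hphi
    have hκ1 := B.one_le_κ
    have hκ0 := B.kap_pos
    have hhalf : (1/2 : ℝ) ∈ Set.Ioo (0:ℝ) 1 := by norm_num
    have hlv0 : (0:ℝ) < (2*B.κ)⁻¹ := by positivity
    have hlv1 : ((2*B.κ)⁻¹ : ℝ) < 1 := by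
      rw [inv_lt_one_iff₀]
      right; linarith
    have hlv : ((2*B.κ)⁻¹ : ℝ) ∈ Set.Ioo (0:ℝ) 1 := ⟨hlv0, hlv1⟩
    have hL12v := (hlam _ hlv).1
    have hL12ge1 : 1 ≤ lam ((2*B.κ)⁻¹) := B.ge_one_of_valid_R hlv0 hlv1.le hL12v
    have hPhv := (hphi _ hhalf).1
    have hPh1 : 1 ≤ phi (1/2) := by
      apply B.ge_one_of_valid_S (by norm_num : (0:ℝ) < 1/2) (by norm_num : (1/2:ℝ) ≤ 1)
      intro f hf A hA
      exact hPhv f hf A A hA (Finset.Subset.refl A)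
    have hC1pos : (0:ℝ) < 8 * B.κ^3 * lam ((2*B.κ)⁻¹) := by
      have h8 : (0:ℝ) < 8 * B.κ^3 := by positivity
      nlinarith
    have hC3pos : (0:ℝ) < 5/2 * B.κ^2 * phi (1/2) := by
      have h5 : (0:ℝ) < 5/2 * B.κ^2 := by positivity
      nlinarith
    refine ⟨8 * B.κ^3 * lam ((2*B.κ)⁻¹), 1, 5/2 * B.κ^2 * phi (1/2),
      hC1pos, one_pos, hC3pos, ?_⟩
    intro a ha
    have hθv := (htheta a ha).1
    have hθ1 : 1 ≤ theta a := B.ge_one_of_valid_S ha.1 ha.2.le hθv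
    have hlamv := (hlam a ha).1
    have hlam1 : 1 ≤ lam a := B.ge_one_of_valid_R ha.1 ha.2.le hlamv
    refine ⟨?_, ?_, ?_⟩
    · -- lam a ≤ C₁ * theta a
      apply (hlam a ha).2
      intro f hf Aa hAa
      have hq0 := B.q_nonneg f
      have hb := B.band_lemma ha.1 ha.2 (by linarith : (0:ℝ) ≤ theta a) hθv
        (by linarith : (0:ℝ) ≤ lam ((2*B.κ)⁻¹)) hL12v hf hAa
      have h1 : 1 + theta a ≤ 2 * theta a := by linarith
      have hL0 : (0:ℝ) ≤ 4 * B.κ^3 * lam ((2*B.κ)⁻¹) := by nlinarith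
      calc B.q (B.R Aa f) ≤ 4 * B.κ^3 * lam ((2*B.κ)⁻¹) * (1 + theta a) * B.q f := hb
      _ ≤ 4 * B.κ^3 * lam ((2*B.κ)⁻¹) * (2 * theta a) * B.q f := by
          apply mul_le_mul_of_nonneg_right _ hq0
          exact mul_le_mul_of_nonneg_left h1 hL0
      _ = 8 * B.κ^3 * lam ((2*B.κ)⁻¹) * theta a * B.q f := by ring
    · -- theta a ≤ 1 * phi a
      rw [one_mul]
      apply (htheta a ha).2
      intro f hf A hA
      exact (hphi a ha).1 f hf A A hA (Finset.Subset.refl A)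
    · -- phi a ≤ C₃ * (lam a / a)
      apply (hphi a ha).2
      intro f hf Aa Bs hAa hBs
      exact B.phi_bound ha.1 ha.2 hlam1 (by linarith : (0:ℝ) ≤ phi (1/2))
        hlamv hPhv hf hAa hBs
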